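/- For a traditional (SC-free) logic program P, the stable models of Γ(P) are exactly the encodings of the fixpoints of P: SM(Γ(P)) = ∪_{F ∈ FP(P)} { [F]_P }. -/
import Mathlib


namespace SOLP

/-- Literals: an atom or its negation-as-failure (NAF). -/
inductive Lit (α : Type) where
  | pos (a : α)
  | neg (a : α)

/-- The atom of a literal. -/
def Lit.atom {α : Type} : Lit α → α
  | .pos a => a
  | .neg a => a

/-- Classical truth of a literal w.r.t. an interpretation. -/
def Lit.holds {α : Type} (I : Set α) : Lit α → Prop
  | .pos a => a ∈ I
  | .neg a => a ∉ I

/-- Renaming of literals. -/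
def Lit.map {α β : Type} (f : α → β) : Lit α → Lit β
  | .pos a => .pos (f a)
  | .neg a => .neg (f a)

/-- Selection condition of a social condition: either a member selection `[P_k]`
naming one program, or a cardinal selection `[l,h]`. -/
inductive Cond (n : ℕ) where
  | member (k : Fin n)
  | card (l h : ℕ)

/-- Social conditions (SCs): a selection condition, a content (set of literals)
and a skeleton (set of nested SCs). -/
inductive SC (α : Type) (n : ℕ) where
  | mk (cond : Cond n) (content : List (Lit α)) (skel : List (SC α n))

/-- Occurrence of an atom in a social condition. -/
inductive SC.HasAtom {α : Type} {n : ℕ} (a : α) : SC α n → Prop where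
  | content {c : Cond n} {cont : List (Lit α)} {skel : List (SC α n)} {b : Lit α}
      (hb : b ∈ cont) (h : b.atom = a) : SC.HasAtom a (.mk c cont skel)
  | skel {c : Cond n} {cont : List (Lit α)} {skel : List (SC α n)} {s' : SC α n}
      (hs : s' ∈ skel) (h : SC.HasAtom a s') : SC.HasAtom a (.mk c cont skel)

/-- Well-formed social conditions: either simple (empty skeleton), or a cardinal
SC all of whose nested SCs are either well-formed cardinal SCs with `h' ≤ h`, or
simple member SCs. -/
inductive SC.WF {α : Type} {n : ℕ} : SC α n → Prop where
  | simple (c : Cond n) (content : List (Lit α)) : SC.WF (.mk c content [])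
  | card (l h : ℕ) (content : List (Lit α)) (skel : List (SC α n))
      (hshape : ∀ s' ∈ skel,
        (∃ (l' h' : ℕ) (c' : List (Lit α)) (sk' : List (SC α n)),
            s' = SC.mk (.card l' h') c' sk' ∧ h' ≤ h) ∨
        (∃ (k : Fin n) (c' : List (Lit α)), s' = SC.mk (.member k) c' []))
      (hwf : ∀ s' ∈ skel, ∀ (l' h' : ℕ) (c' : List (Lit α)) (sk' : List (SC α n)),
          s' = SC.mk (.card l' h') c' sk' → SC.WF s') :
      SC.WF (.mk (.card l h) content skel)

/-- A social rule: head atom (marked as a tolerance rule if the real head is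
`okay(head)`), a body of literals, and a list of SCs, each marked positive
(`true`) or NAF (`false`). -/
structure SRule (α : Type) (n : ℕ) where
  head : α
  isOkay : Bool
  lits : List (Lit α)
  scs : List (SC α n × Bool)

/-- A SOLP program. -/
abbrev SProgram (α : Type) (n : ℕ) := Set (SRule α n)

/-- `okay(p) ← body` becomes `p ← p, body`; other rules are unchanged. -/
def hatP {α : Type} {n : ℕ} (P : SProgram α n) : SProgram α n :=
  {r ∈ P | r.isOkay = false} ∪
    (fun r : SRule α n => ⟨r.head, false, .pos r.head :: r.lits, r.scs⟩) ''
      {r ∈ P | r.isOkay = true}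

/-- The autonomous reduction: remove all social conditions. -/
def AP {α : Type} {n : ℕ} (P : SProgram α n) : SProgram α n :=
  (fun r : SRule α n => ⟨r.head, r.isOkay, r.lits, []⟩) '' P

/-- The atoms occurring in a SOLP program. -/
def SVar {α : Type} {n : ℕ} (P : SProgram α n) : Set α :=
  {a | ∃ r ∈ P, r.head = a ∨ (∃ b ∈ r.lits, Lit.atom b = a) ∨
        (∃ p ∈ r.scs, SC.HasAtom a p.1)}

/-- Truth of a list of literals w.r.t. an interpretation. -/
def litsTrue {α : Type} (I : Set α) (L : List (Lit α)) : Prop := ∀ b ∈ L, b.holds I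

/-- The autonomous immediate consequence operator `AT_P`. -/
def ATP {α : Type} {n : ℕ} (P : SProgram α n) (I : Set α) : Set α :=
  {a | ∃ r ∈ AP P, r.isOkay = false ∧ r.head = a ∧ litsTrue I r.lits} ∪
  {a | ∃ r ∈ AP P, r.isOkay = true ∧ r.head = a ∧ a ∈ I ∧ litsTrue I r.lits}

/-- Autonomous fixpoints of a SOLP program. -/
def AFP {α : Type} {n : ℕ} (P : SProgram α n) : Set (Set α) :=
  {I | I ⊆ SVar (AP P) ∧ ATP P I = I}

/-- Social interpretations: sets of labelled atoms `a_{P_i}`. -/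
abbrev SInterp (α : Type) (n : ℕ) := Set (Fin n × α)

/-- Truth of a literal for program `p` w.r.t. a social interpretation. -/
def Lit.trueFor {α : Type} {n : ℕ} (I : SInterp α n) (p : Fin n) : Lit α → Prop
  | .pos a => (p, a) ∈ I
  | .neg a => (p, a) ∉ I

/-- Truth of an SC of `P_j` in a sub-collection `C'` w.r.t. a social interpretation. -/
inductive SC.TrueIn {α : Type} {n : ℕ} (I : SInterp α n) (j : Fin n) :
    Set (Fin n) → SC α n → Prop where
  | member {C' : Set (Fin n)} {k : Fin n} {content : List (Lit α)} {skel : List (SC α n)}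
      (hk : k ∈ C') (hc : ∀ b ∈ content, Lit.trueFor I k b) :
      SC.TrueIn I j C' (.mk (.member k) content skel)
  | card {C' : Set (Fin n)} {l h : ℕ} {content : List (Lit α)} {skel : List (SC α n)}
      (D : Finset (Fin n)) (hD : ∀ p ∈ D, p ∈ C' ∧ p ≠ j)
      (hl : l ≤ D.card) (hh : D.card ≤ h)
      (hc : ∀ b ∈ content, ∀ p ∈ D, Lit.trueFor I p b)
      (D' : ∀ s' ∈ skel, Finset (Fin n))
      (hsub : ∀ (s' : SC α n) (hs' : s' ∈ skel), D' s' hs' ⊆ D)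
      (hs : ∀ (s' : SC α n) (hs' : s' ∈ skel), SC.TrueIn I j ↑(D' s' hs') s') :
      SC.TrueIn I j C' (.mk (.card l h) content skel)

/-- `s` is true for `P_j` w.r.t. `Ī` (in the whole collection). -/
def SC.TrueFor {α : Type} {n : ℕ} (I : SInterp α n) (j : Fin n) (s : SC α n) : Prop :=
  SC.TrueIn I j Set.univ s

/-- Truth of the body of a social rule of `P_j` w.r.t. a social interpretation. -/
def SRule.bodyTrue {α : Type} {n : ℕ} (I : SInterp α n) (j : Fin n) (r : SRule α n) : Prop :=
  (∀ b ∈ r.lits, Lit.trueFor I j b) ∧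
  (∀ p ∈ r.scs, (p.2 = true → SC.TrueFor I j p.1) ∧ (p.2 = false → ¬ SC.TrueFor I j p.1))

/-- The social immediate consequence operator `ST_C`. -/
def STC {α : Type} {n : ℕ} (C : Fin n → SProgram α n) (I : SInterp α n) : SInterp α n :=
  {x | ∃ r ∈ C x.1, r.isOkay = false ∧ r.head = x.2 ∧ SRule.bodyTrue I x.1 r} ∪
  {x | ∃ r ∈ C x.1, r.isOkay = true ∧ r.head = x.2 ∧ x ∈ I ∧ SRule.bodyTrue I x.1 r}

/-- The labelled version `(L)_{P_i}` of a set of atoms. -/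
def labelled {α : Type} {n : ℕ} (i : Fin n) (L : Set α) : SInterp α n :=
  {x | x.1 = i ∧ x.2 ∈ L}

/-- Candidate social interpretations: combinations of autonomous fixpoints. -/
def Candidate {α : Type} {n : ℕ} (C : Fin n → SProgram α n) (I : SInterp α n) : Prop :=
  ∃ F : Fin n → Set α, (∀ i, F i ∈ AFP (C i)) ∧ I = ⋃ i, labelled i (F i)

/-- The Social Semantics: the set of social models. -/
def SOS {α : Type} {n : ℕ} (C : Fin n → SProgram α n) : Set (SInterp α n) :=
  {I | Candidate C I ∧ STC C I = I}

/-! ### Traditional (normal) logic programs -/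

/-- A normal logic-program rule. -/
structure NRule (γ : Type) where
  head : γ
  body : List (Lit γ)

abbrev NProgram (γ : Type) := Set (NRule γ)

/-- The atoms occurring in a normal program. -/
def NVar {γ : Type} (P : NProgram γ) : Set γ :=
  {a | ∃ r ∈ P, r.head = a ∨ ∃ b ∈ r.body, Lit.atom b = a}

/-- The immediate consequence operator `T_P`. -/
def TN {γ : Type} (P : NProgram γ) (I : Set γ) : Set γ :=
  {a | ∃ r ∈ P, r.head = a ∧ ∀ b ∈ r.body, b.holds I}

/-- Fixpoints of a traditional program. -/
def NFP {γ : Type} (P : NProgram γ) : Set (Set γ) :=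
  {I | I ⊆ NVar P ∧ TN P I = I}

/-- Keep a positive literal, drop a negative one. -/
def Lit.posOnly {γ : Type} : Lit γ → Option (Lit γ)
  | .pos a => some (.pos a)
  | .neg _ => none

/-- The Gelfond–Lifschitz reduct `P^M`. -/
def GLReduct {γ : Type} (P : NProgram γ) (M : Set γ) : NProgram γ :=
  {r | ∃ r' ∈ P, (∀ c : γ, Lit.neg c ∈ r'.body → c ∉ M) ∧
        r = ⟨r'.head, r'.body.filterMap Lit.posOnly⟩}

/-- The least model of a (positive) program, as the intersection of all sets
closed under its rules. -/
def LeastModel {γ : Type} (P : NProgram γ) : Set γ :=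
  ⋂₀ {I | ∀ r ∈ P, (∀ a : γ, Lit.pos a ∈ r.body → a ∈ I) → r.head ∈ I}

/-- Stable models (Gelfond–Lifschitz) of a normal program. -/
def SMN {γ : Type} (P : NProgram γ) : Set (Set γ) :=
  {M | M = LeastModel (GLReduct P M)}

/-! ### The translation vocabulary -/

/-- Atoms of the translated programs: `a_P`, `a'_P`, `sa_P`, `fail_P`, `ρ(s)_P`
and the `g(s)(k)_P` predicates. -/
inductive GAtom (α : Type) (n : ℕ) where
  | atm (a : α)
  | prim (a : α)
  | sup (a : α)
  | fail
  | rho (s : SC α n)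
  | g (s : SC α n) (k : Fin n)

/-- The guessing rules `S_1` over a vocabulary `V`. -/
def GammaS1 {α : Type} {n : ℕ} (V : Set α) : NProgram (GAtom α n) :=
  {r | ∃ a ∈ V, r = ⟨GAtom.atm a, [Lit.neg (GAtom.prim a)]⟩ ∨
                r = ⟨GAtom.prim a, [Lit.neg (GAtom.atm a)]⟩}

/-- The checking rules `S_3` over a vocabulary `V`. -/
def GammaS3 {α : Type} {n : ℕ} (V : Set α) : NProgram (GAtom α n) :=
  {r | ∃ a ∈ V,
      r = ⟨GAtom.fail, [Lit.neg GAtom.fail, Lit.pos (GAtom.sup a), Lit.neg (GAtom.atm a)]⟩ ∨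
      r = ⟨GAtom.fail, [Lit.neg GAtom.fail, Lit.pos (GAtom.atm a), Lit.neg (GAtom.sup a)]⟩}

/-- The transformation `Γ` of Buccafurri–Gottlob, for traditional programs. -/
def Gamma {α : Type} {n : ℕ} (P : NProgram α) : NProgram (GAtom α n) :=
  GammaS1 (NVar P) ∪
  {r | ∃ r' ∈ P, r = ⟨GAtom.sup r'.head, r'.body.map (Lit.map GAtom.atm)⟩} ∪
  GammaS3 (NVar P)

/-- The translated body of a social rule: labelled literals followed by the
`ρ`-literals corresponding to its (possibly NAF'd) SCs. -/
def SRule.transBody {α : Type} {n : ℕ} (r : SRule α n) : List (Lit (GAtom α n)) :=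
  r.lits.map (Lit.map GAtom.atm) ++
    r.scs.map (fun p => if p.2 then Lit.pos (GAtom.rho p.1) else Lit.neg (GAtom.rho p.1))

/-- The extended transformation `Γ'` for SOLP programs. -/
def Gamma' {α : Type} {n : ℕ} (Q : SProgram α n) : NProgram (GAtom α n) :=
  GammaS1 (SVar (AP (hatP Q))) ∪
  {r | ∃ r' ∈ Q, r = ⟨GAtom.sup r'.head, SRule.transBody r'⟩} ∪
  GammaS3 (SVar (AP (hatP Q)))

/-- Forget the SCs (and okay-marking) of a social rule, yielding a traditional rule. -/
def SRule.toN {α : Type} {n : ℕ} (r : SRule α n) : NRule α := ⟨r.head, r.lits⟩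

/-- View an SC-free SOLP program as a traditional program. -/
def toTrad {α : Type} {n : ℕ} (P : SProgram α n) : NProgram α := SRule.toN '' P

/-- The encoding `[M]_P` of an interpretation of a SOLP program `P`. -/
def encode {α : Type} {n : ℕ} (P : SProgram α n) (M : Set α) : Set (GAtom α n) :=
  (GAtom.atm '' M) ∪ (GAtom.prim '' (SVar (AP (hatP P)) \ M)) ∪ (GAtom.sup '' M)

/-- The encoding `[M]_P` of an interpretation of a traditional program `P`. -/
def encodeN {α : Type} (n : ℕ) (P : NProgram α) (M : Set α) : Set (GAtom α n) :=
  (GAtom.atm '' M) ∪ (GAtom.prim '' (NVar P \ M)) ∪ (GAtom.sup '' M)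

/-- Renaming of rules. -/
def NRule.map {γ δ : Type} (f : γ → δ) (r : NRule γ) : NRule δ :=
  ⟨f r.head, r.body.map (Lit.map f)⟩

/-- Labelling of a whole program w.r.t. `P_i`. -/
def labProg {γ : Type} {n : ℕ} (i : Fin n) (P : NProgram γ) : NProgram (Fin n × γ) :=
  (NRule.map (fun a => (i, a))) '' P

/-! ### Aggregate programs -/

/-- A `#count` aggregate `l ≤ #count{K : atomOf K, cond K} ≤ h`. -/
structure CountAgg (γ : Type) (κ : Type) where
  l : ℕ
  h : ℕ
  atomOf : κ → γ
  cond : κ → Prop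

/-- Truth of a count aggregate w.r.t. an interpretation. -/
def CountAgg.holds {γ κ : Type} (M : Set γ) (c : CountAgg γ κ) : Prop :=
  c.l ≤ Set.ncard {K | c.cond K ∧ c.atomOf K ∈ M} ∧
  Set.ncard {K | c.cond K ∧ c.atomOf K ∈ M} ≤ c.h

/-- A rule of a logic program with count aggregates. -/
structure ARule (γ : Type) (κ : Type) where
  head : γ
  body : List (Lit γ)
  aggs : List (CountAgg γ κ)

abbrev AProgram (γ : Type) (κ : Type) := Set (ARule γ κ)

/-- Truth of the body of an aggregate rule. -/
def ARule.bodyHolds {γ κ : Type} (M : Set γ) (r : ARule γ κ) : Prop :=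
  (∀ b ∈ r.body, b.holds M) ∧ (∀ c ∈ r.aggs, c.holds M)

/-- `M` is a (classical) model of an aggregate program. -/
def AModel {γ κ : Type} (P : AProgram γ κ) (M : Set γ) : Prop :=
  ∀ r ∈ P, r.bodyHolds M → r.head ∈ M

/-- Stable (answer-set) semantics for aggregate programs: `M` is a minimal model
of the reduct consisting of the rules whose bodies are true w.r.t. `M`. -/
def AStable {γ κ : Type} (P : AProgram γ κ) (M : Set γ) : Prop :=
  AModel P M ∧
  ∀ N : Set γ, N ⊆ M → (∀ r ∈ P, r.bodyHolds M → r.bodyHolds N → r.head ∈ N) → N = M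

/-- An aggregate-free rule, seen as an aggregate rule. -/
def NRule.toA {γ : Type} (κ : Type) (r : NRule γ) : ARule γ κ := ⟨r.head, r.body, []⟩

def toAProg {γ : Type} (κ : Type) (P : NProgram γ) : AProgram γ κ := NRule.toA κ '' P

/-! ### The translation `Ψ` of social conditions -/

/-- Membership of a rule in the translation `Ψ^{P_j}(s)` of a social condition. -/
inductive PsiMem {α : Type} {n : ℕ} (j : Fin n) :
    SC α n → ARule (Fin n × GAtom α n) (Fin n) → Prop where
  | memberGuess (k : Fin n) (content : List (Lit α)) (skel : List (SC α n)) :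
      PsiMem j (.mk (.member k) content skel)
        ⟨(j, GAtom.g (.mk (.member k) content skel) k),
          content.map (Lit.map fun a => (k, GAtom.atm a)), []⟩
  | memberCheck (k : Fin n) (content : List (Lit α)) (skel : List (SC α n)) :
      PsiMem j (.mk (.member k) content skel)
        ⟨(j, GAtom.rho (.mk (.member k) content skel)),
          [Lit.pos (j, GAtom.g (.mk (.member k) content skel) k)], []⟩
  | cardGuess (l h : ℕ) (content : List (Lit α)) (skel : List (SC α n))
      (i : Fin n) (hij : i ≠ j) :
      PsiMem j (.mk (.card l h) content skel)
        ⟨(j, GAtom.g (.mk (.card l h) content skel) i),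
          content.map (Lit.map fun a => (i, GAtom.atm a)) ++
            skel.map (fun s' => Lit.pos (j, GAtom.rho s')), []⟩
  | cardCheck (l h : ℕ) (content : List (Lit α)) (skel : List (SC α n)) :
      PsiMem j (.mk (.card l h) content skel)
        ⟨(j, GAtom.rho (.mk (.card l h) content skel)), [],
          [⟨l, h, fun K => (j, GAtom.g (.mk (.card l h) content skel) K),
            fun K => K ≠ j⟩]⟩
  | nested (l h : ℕ) (content : List (Lit α)) (skel : List (SC α n))
      (s' : SC α n) (hs : s' ∈ skel) (r : ARule (Fin n × GAtom α n) (Fin n))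
      (hr : PsiMem j s' r) :
      PsiMem j (.mk (.card l h) content skel) r

/-- The translation `Ψ^{P_j}(s)` of a single social condition. -/
def Psi {α : Type} {n : ℕ} (j : Fin n) (s : SC α n) :
    AProgram (Fin n × GAtom α n) (Fin n) :=
  {r | PsiMem j s r}

/-- The depth-0 social conditions of a SOLP program. -/
def MSC {α : Type} {n : ℕ} (P : SProgram α n) : Set (SC α n) :=
  {s | ∃ r ∈ P, ∃ b : Bool, (s, b) ∈ r.scs}

/-- The SC translation `C(P_1, ..., P_n)` of a whole SOLP collection. -/
def CTrans {α : Type} {n : ℕ} (C : Fin n → SProgram α n) :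
    AProgram (Fin n × GAtom α n) (Fin n) :=
  ⋃ j, ⋃ s ∈ MSC (C j), Psi j s

/-- The program of facts `{a ← : a ∈ Ī}` corresponding to a social interpretation. -/
def factProg {α : Type} {n : ℕ} (I : SInterp α n) :
    AProgram (Fin n × GAtom α n) (Fin n) :=
  {r | ∃ x ∈ I, r = ⟨(x.1, GAtom.atm x.2), [], []⟩}

/-- The set `SAT^{P_j}_{Ī}(s)` of heads of rules of `Ψ^{P_j}(s)` belonging to
some stable model of `C(P_1,...,P_n) ∪ Q`. -/
def SAT {α : Type} {n : ℕ} (C : Fin n → SProgram α n) (I : SInterp α n)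
    (j : Fin n) (s : SC α n) : Set (Fin n × GAtom α n) :=
  {x | (∃ r, PsiMem j s r ∧ r.head = x) ∧
       ∃ M, AStable (CTrans C ∪ factProg I) M ∧ x ∈ M}

/-! ### COLP programs -/

/-- A COLP rule: a classical rule or an okay-rule, with a body of literals. -/
structure CRule (α : Type) where
  head : α
  isOkay : Bool
  lits : List (Lit α)

abbrev CProgram (α : Type) := Set (CRule α)

/-- The hat operator on COLP programs: `okay(p) ← body` becomes `p ← p, body`. -/
def CRule.hatN {α : Type} (r : CRule α) : NRule α :=
  if r.isOkay then ⟨r.head, .pos r.head :: r.lits⟩ else ⟨r.head, r.lits⟩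

def hatC {α : Type} (P : CProgram α) : NProgram α := CRule.hatN '' P

/-- The SOLP translation `σ^n` of a COLP rule. -/
def sigmaRule {α : Type} (n : ℕ) (r : CRule α) : SRule α n :=
  ⟨r.head, r.isOkay, r.lits, [(SC.mk (.card (n - 1) (n - 1)) [Lit.pos r.head] [], true)]⟩

/-- The SOLP translation `σ^n` of a COLP program. -/
def sigmaP {α : Type} (n : ℕ) (P : CProgram α) : SProgram α n := sigmaRule n '' P

/-- The joint fixpoints `JFP(P_1,...,P_n)` of a collection of COLP programs. -/
def JFP {α : Type} {n : ℕ} (P : Fin n → CProgram α) : Set (Set α) :=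
  ⋂ i, NFP (hatC (P i))

end SOLP

section Aux
open SOLP

variable {α : Type} {n : ℕ}

lemma lit_neg_mem_map {γ δ : Type} {f : γ → δ} {L : List (Lit γ)} {c : δ} :
    Lit.neg c ∈ L.map (Lit.map f) ↔ ∃ b, Lit.neg b ∈ L ∧ c = f b := by
  simp only [List.mem_map]
  constructor
  · rintro ⟨b, hb, hfb⟩
    cases b with
    | pos a => simp [Lit.map] at hfb
    | neg a => exact ⟨a, hb, by simpa [Lit.map, eq_comm] using hfb⟩
  · rintro ⟨b, hb, rfl⟩
    exact ⟨.neg b, hb, rfl⟩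

lemma lit_pos_mem_filterMap_map {γ δ : Type} {f : γ → δ} {L : List (Lit γ)} {c : δ} :
    Lit.pos c ∈ (L.map (Lit.map f)).filterMap Lit.posOnly ↔ ∃ b, Lit.pos b ∈ L ∧ c = f b := by
  simp only [List.mem_filterMap, List.mem_map]
  constructor
  · rintro ⟨x, ⟨b, hb, rfl⟩, hx⟩
    cases b with
    | pos a => exact ⟨a, hb, by simpa [Lit.map, Lit.posOnly, eq_comm] using hx⟩
    | neg a => simp [Lit.map, Lit.posOnly] at hx
  · rintro ⟨b, hb, rfl⟩
    exact ⟨.pos (f b), ⟨.pos b, hb, rfl⟩, rfl⟩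

lemma leastModel_closed {γ : Type} (Q : NProgram γ) :
    ∀ r ∈ Q, (∀ a, Lit.pos a ∈ r.body → a ∈ LeastModel Q) → r.head ∈ LeastModel Q := by
  intro r hr hbody
  rw [LeastModel, Set.mem_sInter]
  intro I hI
  exact hI r hr fun a ha => (Set.mem_sInter.mp (hbody a ha)) I hI

lemma leastModel_subset {γ : Type} (Q : NProgram γ) {I : Set γ}
    (hI : ∀ r ∈ Q, (∀ a, Lit.pos a ∈ r.body → a ∈ I) → r.head ∈ I) :
    LeastModel Q ⊆ I :=
  Set.sInter_subset_of_mem hI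

lemma atm_mem_encodeN {P : NProgram α} {F : Set α} {a : α} :
    GAtom.atm (n := n) a ∈ encodeN n P F ↔ a ∈ F := by simp [encodeN]

lemma prim_mem_encodeN {P : NProgram α} {F : Set α} {a : α} :
    GAtom.prim (n := n) a ∈ encodeN n P F ↔ a ∈ NVar P \ F := by simp [encodeN]

lemma sup_mem_encodeN {P : NProgram α} {F : Set α} {a : α} :
    GAtom.sup (n := n) a ∈ encodeN n P F ↔ a ∈ F := by simp [encodeN]

lemma fail_not_mem_encodeN {P : NProgram α} {F : Set α} :
    GAtom.fail (α := α) (n := n) ∉ encodeN n P F := by simp [encodeN]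

end Aux

section Reduct
open SOLP

lemma mem_gamma_reduct {α : Type} {n : ℕ} {P : NProgram α} {M : Set (GAtom α n)}
    {r : NRule (GAtom α n)} :
    r ∈ GLReduct (Gamma (n := n) P) M ↔
      (∃ a ∈ NVar P, GAtom.prim a ∉ M ∧ r = ⟨GAtom.atm a, []⟩) ∨
      (∃ a ∈ NVar P, GAtom.atm a ∉ M ∧ r = ⟨GAtom.prim a, []⟩) ∨
      (∃ r' ∈ P, (∀ b : α, Lit.neg b ∈ r'.body → GAtom.atm b ∉ M) ∧
          r = ⟨GAtom.sup r'.head, (r'.body.map (Lit.map GAtom.atm)).filterMap Lit.posOnly⟩) ∨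
      (∃ a ∈ NVar P, GAtom.fail ∉ M ∧ GAtom.atm a ∉ M ∧
          r = ⟨GAtom.fail, [Lit.pos (GAtom.sup a)]⟩) ∨
      (∃ a ∈ NVar P, GAtom.fail ∉ M ∧ GAtom.sup a ∉ M ∧
          r = ⟨GAtom.fail, [Lit.pos (GAtom.atm a)]⟩) := by
  constructor
  · rintro ⟨r', hr', hneg, rfl⟩
    rcases hr' with (h1 | h2) | h3
    · rcases h1 with ⟨a, ha, h | h⟩ <;> subst h
      · exact Or.inl ⟨a, ha, hneg _ (by simp), by simp [List.filterMap, Lit.posOnly]⟩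
      · exact Or.inr (Or.inl ⟨a, ha, hneg _ (by simp), by simp [List.filterMap, Lit.posOnly]⟩)
    · rcases h2 with ⟨r', hr', rfl⟩
      refine Or.inr (Or.inr (Or.inl ⟨r', hr', ?_, rfl⟩))
      intro b hb
      exact hneg _ (lit_neg_mem_map.mpr ⟨b, hb, rfl⟩)
    · rcases h3 with ⟨a, ha, h | h⟩ <;> subst h
      · exact Or.inr (Or.inr (Or.inr (Or.inl ⟨a, ha, hneg _ (by simp), hneg _ (by simp),
          by simp [List.filterMap, Lit.posOnly]⟩)))
      · exact Or.inr (Or.inr (Or.inr (Or.inr ⟨a, ha, hneg _ (by simp), hneg _ (by simp),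
          by simp [List.filterMap, Lit.posOnly]⟩)))
  · rintro (⟨a, ha, hp, rfl⟩ | ⟨a, ha, hp, rfl⟩ | ⟨r', hr', hp, rfl⟩ |
        ⟨a, ha, hf, hp, rfl⟩ | ⟨a, ha, hf, hp, rfl⟩)
    · exact ⟨⟨GAtom.atm a, [Lit.neg (GAtom.prim a)]⟩, Or.inl (Or.inl ⟨a, ha, Or.inl rfl⟩),
        by rintro c hc; simp at hc; subst hc; exact hp, by simp [List.filterMap, Lit.posOnly]⟩
    · exact ⟨⟨GAtom.prim a, [Lit.neg (GAtom.atm a)]⟩, Or.inl (Or.inl ⟨a, ha, Or.inr rfl⟩),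
        by rintro c hc; simp at hc; subst hc; exact hp, by simp [List.filterMap, Lit.posOnly]⟩
    · refine ⟨⟨GAtom.sup r'.head, r'.body.map (Lit.map GAtom.atm)⟩,
        Or.inl (Or.inr ⟨r', hr', rfl⟩), ?_, rfl⟩
      intro c hc
      rcases lit_neg_mem_map.mp hc with ⟨b, hb, rfl⟩
      exact hp b hb
    · refine ⟨⟨GAtom.fail, [Lit.neg GAtom.fail, Lit.pos (GAtom.sup a), Lit.neg (GAtom.atm a)]⟩,
        Or.inr ⟨a, ha, Or.inl rfl⟩, ?_, by simp [List.filterMap, Lit.posOnly]⟩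
      rintro c hc
      simp at hc
      rcases hc with rfl | rfl
      · exact hf
      · exact hp
    · refine ⟨⟨GAtom.fail, [Lit.neg GAtom.fail, Lit.pos (GAtom.atm a), Lit.neg (GAtom.sup a)]⟩,
        Or.inr ⟨a, ha, Or.inr rfl⟩, ?_, by simp [List.filterMap, Lit.posOnly]⟩
      rintro c hc
      simp at hc
      rcases hc with rfl | rfl
      · exact hf
      · exact hp

end Reduct

open SOLP in
/-- The invariant satisfied by all members of a stable model of `Γ(P)`. -/
def GoodAt {α : Type} {n : ℕ} (P : NProgram α) (M : Set (GAtom α n)) : GAtom α n → Prop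
  | .atm a => a ∈ NVar P ∧ GAtom.prim a ∉ M
  | .prim a => a ∈ NVar P ∧ GAtom.atm a ∉ M
  | .sup a => a ∈ TN P {b | GAtom.atm b ∈ M}
  | _ => False

open SOLP in
/-- for a traditional program `P`, `SM(Γ(P)) = ∪_{F ∈ FP(P)} {[F]_P}`. -/
theorem sm_gamma_eq_fp_encodings {α : Type} (n : ℕ) (P : NProgram α) :
    SMN (Gamma (n := n) P) = ⋃ F ∈ NFP P, {encodeN n P F} := by
  ext M
  simp only [Set.mem_iUnion, Set.mem_singleton_iff]
  constructor
  · intro hM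
    have hM' : M = LeastModel (GLReduct (Gamma (n := n) P) M) := hM
    set R := GLReduct (Gamma (n := n) P) M with hRdef
    have hclosed : ∀ r ∈ R, (∀ a, Lit.pos a ∈ r.body → a ∈ M) → r.head ∈ M := by
      have h := leastModel_closed R
      rw [← hM'] at h
      exact h
    have hmin : ∀ I : Set (GAtom α n),
        (∀ r ∈ R, (∀ a, Lit.pos a ∈ r.body → a ∈ I) → r.head ∈ I) → M ⊆ I := by
      intro I hI
      rw [hM']
      exact leastModel_subset R hI
    -- Step 1: fail ∉ M
    have hfail : GAtom.fail (α := α) (n := n) ∉ M := by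
      intro hf
      have hsub : M ⊆ M \ {GAtom.fail (α := α) (n := n)} := by
        apply hmin
        intro r hr hb
        have hbM : ∀ a, Lit.pos a ∈ r.body → a ∈ M := fun a ha => (hb a ha).1
        refine ⟨hclosed r hr hbM, ?_⟩
        rcases mem_gamma_reduct.mp hr with ⟨a, _, _, rfl⟩ | ⟨a, _, _, rfl⟩ |
            ⟨r', _, _, rfl⟩ | ⟨a, _, hf', _, rfl⟩ | ⟨a, _, hf', _, rfl⟩
        · simp
        · simp
        · simp
        · exact absurd hf hf'
        · exact absurd hf hf'
      exact (hsub hf).2 rfl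
    set F : Set α := {a | GAtom.atm (n := n) a ∈ M} with hFdef
    -- Step 2: the invariant
    have hQ : ∀ x ∈ M, GoodAt P M x := by
      have hsub : M ⊆ {x ∈ M | GoodAt P M x} := by
        apply hmin
        intro r hr hb
        have hbM : ∀ a, Lit.pos a ∈ r.body → a ∈ M := fun a ha => (hb a ha).1
        have hhead := hclosed r hr hbM
        refine ⟨hhead, ?_⟩
        rcases mem_gamma_reduct.mp hr with ⟨a, ha, hp, rfl⟩ | ⟨a, ha, hp, rfl⟩ |
            ⟨r', hr', hneg, rfl⟩ | ⟨a, ha, hf', hp, rfl⟩ | ⟨a, ha, hf', hp, rfl⟩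
        · exact ⟨ha, hp⟩
        · exact ⟨ha, hp⟩
        · refine ⟨r', hr', rfl, ?_⟩
          intro b hbmem
          cases b with
          | pos b =>
            exact hbM (GAtom.atm b) (lit_pos_mem_filterMap_map.mpr ⟨b, hbmem, rfl⟩)
          | neg b => exact hneg b hbmem
        · exact absurd hhead hfail
        · exact absurd hhead hfail
      exact fun x hx => (hsub hx).2
    -- Step 3: membership lemmas
    have hatmM : ∀ a ∈ NVar P, GAtom.prim (n := n) a ∉ M → GAtom.atm (n := n) a ∈ M := by
      intro a ha hp
      exact hclosed ⟨GAtom.atm a, []⟩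
        (mem_gamma_reduct.mpr (Or.inl ⟨a, ha, hp, rfl⟩)) (by simp)
    have hprimM : ∀ a ∈ NVar P, GAtom.atm (n := n) a ∉ M → GAtom.prim (n := n) a ∈ M := by
      intro a ha hp
      exact hclosed ⟨GAtom.prim a, []⟩
        (mem_gamma_reduct.mpr (Or.inr (Or.inl ⟨a, ha, hp, rfl⟩))) (by simp)
    have hsupM : ∀ a ∈ TN P F, GAtom.sup (n := n) a ∈ M := by
      intro a ha
      obtain ⟨r', hr', hh, hholds⟩ := ha
      subst hh
      refine hclosed ⟨GAtom.sup r'.head,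
          (r'.body.map (Lit.map GAtom.atm)).filterMap Lit.posOnly⟩
        (mem_gamma_reduct.mpr (Or.inr (Or.inr (Or.inl ⟨r', hr', ?_, rfl⟩)))) ?_
      · intro b hb
        exact hholds (Lit.neg b) hb
      · intro x hx
        rcases lit_pos_mem_filterMap_map.mp hx with ⟨b, hb, rfl⟩
        exact hholds (Lit.pos b) hb
    -- Step 4: TN P F = F
    have hTNsub : TN P F ⊆ F := by
      intro a ha
      by_contra hnF
      have haNV : a ∈ NVar P := by
        obtain ⟨r', hr', hh, _⟩ := ha
        exact ⟨r', hr', Or.inl hh⟩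
      have hsup := hsupM a ha
      have hfl := hclosed ⟨GAtom.fail, [Lit.pos (GAtom.sup a)]⟩
        (mem_gamma_reduct.mpr (Or.inr (Or.inr (Or.inr (Or.inl ⟨a, haNV, hfail, hnF, rfl⟩)))))
        (by intro x hx; simp at hx; subst hx; exact hsup)
      exact hfail hfl
    have hFsub : F ⊆ TN P F := by
      intro a haF
      have hq := hQ _ haF
      by_contra hnT
      have hsupn : GAtom.sup (n := n) a ∉ M := fun hs => hnT (hQ _ hs)
      have hfl := hclosed ⟨GAtom.fail, [Lit.pos (GAtom.atm a)]⟩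
        (mem_gamma_reduct.mpr (Or.inr (Or.inr (Or.inr (Or.inr ⟨a, hq.1, hfail, hsupn, rfl⟩)))))
        (by intro x hx; simp at hx; subst hx; exact haF)
      exact hfail hfl
    refine ⟨F, ⟨fun a haF => (hQ _ haF).1, Set.Subset.antisymm hTNsub hFsub⟩, ?_⟩
    apply Set.Subset.antisymm
    · intro x hx
      have hq := hQ x hx
      cases x with
      | atm a => exact atm_mem_encodeN.mpr hx
      | prim a => exact prim_mem_encodeN.mpr ⟨hq.1, hq.2⟩
      | sup a => exact sup_mem_encodeN.mpr (hTNsub hq)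
      | fail => exact hq.elim
      | rho s => exact hq.elim
      | g s k => exact hq.elim
    · intro x hx
      simp only [encodeN, Set.mem_union, Set.mem_image] at hx
      rcases hx with (⟨a, haF, rfl⟩ | ⟨a, haNF, rfl⟩) | ⟨a, haF, rfl⟩
      · exact haF
      · exact hprimM a haNF.1 haNF.2
      · exact hsupM a (hFsub haF)
  · rintro ⟨F, hF, rfl⟩
    obtain ⟨hFV, hTF⟩ := hF
    set M := encodeN n P F with hMdef
    show M = LeastModel (GLReduct (Gamma (n := n) P) M)
    set R := GLReduct (Gamma (n := n) P) M with hRdef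
    have hatmLM : ∀ a ∈ F, GAtom.atm (n := n) a ∈ LeastModel R := by
      intro a haF
      exact leastModel_closed R ⟨GAtom.atm a, []⟩
        (mem_gamma_reduct.mpr (Or.inl ⟨a, hFV haF,
          fun hp => (prim_mem_encodeN.mp hp).2 haF, rfl⟩)) (by simp)
    apply Set.Subset.antisymm
    · intro x hx
      simp only [hMdef, encodeN, Set.mem_union, Set.mem_image] at hx
      rcases hx with (⟨a, haF, rfl⟩ | ⟨a, haNF, rfl⟩) | ⟨a, haF, rfl⟩
      · exact hatmLM a haF
      · exact leastModel_closed R ⟨GAtom.prim a, []⟩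
          (mem_gamma_reduct.mpr (Or.inr (Or.inl ⟨a, haNF.1,
            fun h => haNF.2 (atm_mem_encodeN.mp h), rfl⟩))) (by simp)
      · have haT : a ∈ TN P F := by rw [hTF]; exact haF
        obtain ⟨r', hr', hh, hholds⟩ := haT
        subst hh
        refine leastModel_closed R ⟨GAtom.sup r'.head,
            (r'.body.map (Lit.map GAtom.atm)).filterMap Lit.posOnly⟩
          (mem_gamma_reduct.mpr (Or.inr (Or.inr (Or.inl ⟨r', hr', ?_, rfl⟩)))) ?_
        · intro b hb
          exact fun h => hholds (Lit.neg b) hb (atm_mem_encodeN.mp h)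
        · intro x hx
          rcases lit_pos_mem_filterMap_map.mp hx with ⟨b, hb, rfl⟩
          exact hatmLM b (hholds (Lit.pos b) hb)
    · apply leastModel_subset
      intro r hr hb
      rcases mem_gamma_reduct.mp hr with ⟨a, ha, hp, rfl⟩ | ⟨a, ha, hp, rfl⟩ |
          ⟨r', hr', hneg, rfl⟩ | ⟨a, ha, hf, hp, rfl⟩ | ⟨a, ha, hf, hp, rfl⟩
      · exact atm_mem_encodeN.mpr (by by_contra h; exact hp (prim_mem_encodeN.mpr ⟨ha, h⟩))
      · exact prim_mem_encodeN.mpr ⟨ha, fun h => hp (atm_mem_encodeN.mpr h)⟩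
      · refine sup_mem_encodeN.mpr ?_
        rw [← hTF]
        refine ⟨r', hr', rfl, ?_⟩
        intro b hbmem
        cases b with
        | pos b =>
          exact atm_mem_encodeN.mp (hb (GAtom.atm b) (lit_pos_mem_filterMap_map.mpr ⟨b, hbmem, rfl⟩))
        | neg b => exact fun h => hneg b hbmem (atm_mem_encodeN.mpr h)
      · have hs := sup_mem_encodeN.mp (hb (GAtom.sup a) (by simp))
        exact absurd (atm_mem_encodeN.mpr hs) hp
      · have hs := atm_mem_encodeN.mp (hb (GAtom.atm a) (by simp))
        exact absurd (sup_mem_encodeN.mpr hs) hp
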